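/- arXiv:1303.4042 — 6 statements merged into one kernel-verified Lean document; each statement's English description precedes it below -/
import Mathlib

section
/- Let f ∈ L¹(ℝ) ∩ Lᵖ(ℝ) be a probability density for some p > 1, and define h(u) = (f(√u)+f(−√u))/(2√u) for u > 0, h(u) = 0 otherwise. Then for any p′ with 1 < p′ < 2p/(1+p), the function h belongs to L^{p′}(ℝ). -/
/-!
With `g x = f x + f (-x)`, the function `h` is `g(√u) / (2√u)` on `u > 0`, and the substitution
`u = x²` turns `∫ |h|^p'` into a multiple of `∫₀^∞ |g x|^p' x^(1-p') dx`. On `(1, ∞)` the weight is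
at most `1` and `|g|^p' ≤ |g| + |g|^p` since `1 ≤ p' ≤ p`. On `(0, 1]` Hölder's inequality with
exponents `p/p'` and `p/(p-p')` applies: `x^((1-p')p/(p-p'))` is integrable near `0` exactly when
`p' < 2p/(1+p)`.
-/

open MeasureTheory Set Real
open scoped ENNReal

lemma Real.rpow_le_self_add_rpow {x r p : ℝ} (hx : 0 ≤ x) (hr : 1 ≤ r) (hrp : r ≤ p) :
    x ^ r ≤ x + x ^ p := by
  rcases le_or_gt x 1 with hx1 | hx1
  · have := Real.rpow_le_rpow_of_exponent_ge' hx hx1 zero_le_one hr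
    rw [Real.rpow_one] at this
    linarith [Real.rpow_nonneg hx p]
  · linarith [Real.rpow_le_rpow_of_exponent_le hx1.le hrp]

section
variable {α E : Type*} [MeasurableSpace α] {μ : Measure α} [NormedAddCommGroup E]

theorem MeasureTheory.Integrable.norm_rpow_of_memLp {f : α → E} {p r : ℝ} (hf : Integrable f μ)
    (hfp : MemLp f (ENNReal.ofReal p) μ) (hr : 1 ≤ r) (hrp : r ≤ p) :
    Integrable (fun x => ‖f x‖ ^ r) μ := by
  have hp : 0 < p := by linarith
  have hfp' : Integrable (fun x => ‖f x‖ ^ p) μ := by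
    simpa [ENNReal.toReal_ofReal hp.le] using
      hfp.integrable_norm_rpow (by simpa using hp) ENNReal.ofReal_ne_top
  refine (hf.norm.add hfp').mono' (hf.1.norm.aemeasurable.pow_const r).aestronglyMeasurable
    (.of_forall fun x => ?_)
  rw [Real.norm_of_nonneg (by positivity)]
  exact Real.rpow_le_self_add_rpow (norm_nonneg _) hr hrp

theorem integrableOn_Ioc_norm_rpow_mul_rpow {g : ℝ → E} {p r t : ℝ}
    (hg : MemLp g (ENNReal.ofReal p) (volume.restrict (Ioc 0 1)))
    (hr : 0 < r) (hrp : r < p) (ht : r / p - 1 < t) :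
    IntegrableOn (fun x => ‖g x‖ ^ r * x ^ t) (Ioc 0 1) := by
  have hp : 0 < p := hr.trans hrp
  have hq : 0 < p / (p - r) := div_pos hp (by linarith)
  have hconj : (p / r).HolderConjugate (p / (p - r)) := by
    rw [Real.holderConjugate_iff_eq_conjExponent ((one_lt_div hr).2 hrp)]
    field_simp
  have hnorm : MemLp (fun x => ‖g x‖ ^ r) (ENNReal.ofReal (p / r)) (volume.restrict (Ioc 0 1)) := by
    simpa [ENNReal.ofReal_div_of_pos hr, ENNReal.toReal_ofReal hr.le] using
      hg.norm_rpow_div (ENNReal.ofReal r)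
  have hweight : MemLp (fun x : ℝ => x ^ t) (ENNReal.ofReal (p / (p - r)))
      (volume.restrict (Ioc 0 1)) := by
    rw [← integrable_norm_rpow_iff (by fun_prop) (by simpa using hq) ENNReal.ofReal_ne_top,
      ENNReal.toReal_ofReal hq.le]
    have hexp : -1 < t * (p / (p - r)) := by
      rw [mul_div_assoc', lt_div_iff₀ (by linarith)]
      rw [div_sub_one hp.ne', div_lt_iff₀ hp] at ht
      nlinarith
    refine (intervalIntegral.intervalIntegrable_rpow' hexp (a := 0) (b := 1)).1.congr_fun
      (fun x hx => ?_) measurableSet_Ioc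
    rw [Real.norm_of_nonneg (Real.rpow_nonneg hx.1.le _), ← Real.rpow_mul hx.1.le]
  have := hconj.ennrealOfReal
  exact hnorm.integrable_mul hweight

theorem integrableOn_Ioi_norm_rpow_mul_rpow {g : ℝ → E} {p r t : ℝ} (hg : Integrable g)
    (hgp : MemLp g (ENNReal.ofReal p)) (hr : 1 ≤ r) (hrp : r < p) (ht : r / p - 1 < t)
    (ht₀ : t ≤ 0) :
    IntegrableOn (fun x => ‖g x‖ ^ r * x ^ t) (Ioi 0) := by
  rw [← Ioc_union_Ioi_eq_Ioi zero_le_one]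
  refine (integrableOn_Ioc_norm_rpow_mul_rpow (hgp.restrict _) (by linarith) hrp ht).union ?_
  refine (hg.norm_rpow_of_memLp hgp hr hrp.le).integrableOn.mul_bdd (c := 1) (by fun_prop) ?_
  refine (ae_restrict_iff' measurableSet_Ioi).2 (.of_forall fun x hx => ?_)
  rw [Real.norm_of_nonneg (Real.rpow_nonneg (zero_le_one.trans hx.out.le) _)]
  exact Real.rpow_le_one_of_one_le_of_nonpos hx.out.le ht₀

theorem integrableOn_Ioi_comp_sqrt_iff [NormedSpace ℝ E] (φ : ℝ → E) :
    IntegrableOn (fun u => φ (√u)) (Ioi 0) ↔ IntegrableOn (fun x => x • φ x) (Ioi 0) := by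
  rw [← integrableOn_Ioi_comp_rpow_iff' _ two_ne_zero]
  refine integrableOn_congr_fun (fun x hx => ?_) measurableSet_Ioi
  norm_num [Real.sqrt_sq hx.out.le]

end

theorem memLp_indicator_Ioi_comp_sqrt_div_sqrt {g : ℝ → ℝ} {p q : ℝ} (hg_meas : Measurable g)
    (hg : Integrable g) (hgp : MemLp g (ENNReal.ofReal p)) (hp : 0 < p) (hq : 1 < q)
    (hqp : q < 2 * p / (1 + p)) :
    MemLp ((Ioi 0).indicator fun u => g √u / √u) (ENNReal.ofReal q) := by
  have hq₀ : 0 < q := by linarith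
  have hqp' : q * (1 + p) < 2 * p := (lt_div_iff₀ (by linarith)).1 hqp
  have hweighted : IntegrableOn (fun x => ‖g x‖ ^ q * x ^ (1 - q)) (Ioi 0) :=
    integrableOn_Ioi_norm_rpow_mul_rpow hg hgp hq.le (by nlinarith)
      (by rw [div_sub_one hp.ne', div_lt_iff₀ hp]; nlinarith) (by linarith)
  have hmeas : Measurable ((Ioi 0).indicator fun u => g √u / √u) :=
    Measurable.indicator (by fun_prop) measurableSet_Ioi
  rw [← integrable_norm_rpow_iff hmeas.aestronglyMeasurable (by simpa using hq₀)
    ENNReal.ofReal_ne_top, ENNReal.toReal_ofReal hq₀.le]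
  have hnorm : (fun u => ‖(Ioi 0).indicator (fun u => g √u / √u) u‖ ^ q) =
      (Ioi 0).indicator fun u => ‖g √u / √u‖ ^ q := by
    ext u
    by_cases hu : u ∈ Ioi 0 <;> simp [hu, Real.zero_rpow hq₀.ne']
  rw [hnorm, integrable_indicator_iff measurableSet_Ioi,
    integrableOn_Ioi_comp_sqrt_iff fun x => ‖g x / x‖ ^ q]
  refine hweighted.congr_fun (fun x (hx : 0 < x) => ?_) measurableSet_Ioi
  dsimp only
  rw [smul_eq_mul, norm_div, Real.norm_of_nonneg hx.le, Real.div_rpow (norm_nonneg _) hx.le,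
    Real.rpow_sub hx, Real.rpow_one]
  field_simp

theorem h_extra_integrability_general
    (f : ℝ → ℝ) (hf_meas : Measurable f)
    (hf_int : Integrable f)
    (p : ℝ) (hp : 1 < p) (hfp : MemLp f (ENNReal.ofReal p))
    (h : ℝ → ℝ)
    (hh : ∀ u : ℝ, h u = if 0 < u then (f (Real.sqrt u) + f (-Real.sqrt u)) / (2 * Real.sqrt u)
      else 0)
    (p' : ℝ) (hp'1 : 1 < p') (hp'2 : p' < 2 * p / (1 + p)) :
    MemLp h (ENNReal.ofReal p') := by
  set g : ℝ → ℝ := fun x => f x + f (-x)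
  have h_eq : h = fun u => 2⁻¹ * (Ioi 0).indicator (fun u => g √u / √u) u := by
    ext u
    by_cases hu : 0 < u
    · simp only [hh, hu, ↓reduceIte, mem_Ioi, indicator_of_mem, g]
      field_simp
    · simp [hh, hu]
  have hg_meas : Measurable g := hf_meas.add (hf_meas.comp measurable_neg)
  have hg : Integrable g := hf_int.add hf_int.comp_neg
  have hgp : MemLp g (ENNReal.ofReal p) :=
    hfp.add (hfp.comp_measurePreserving (Measure.measurePreserving_neg _))
  rw [h_eq]
  exact (memLp_indicator_Ioi_comp_sqrt_div_sqrt hg_meas hg hgp (by linarith) hp'1 hp'2).const_mul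
    2⁻¹

/-- If `f ∈ L¹ ∩ Lᵖ` is a probability density for some `p > 1` and
`h(u) = (f(√u)+f(−√u))/(2√u)` for `u > 0`, `h(u) = 0` otherwise, then `h ∈ L^{p'}`
for any `1 < p' < 2p/(1+p)`. -/
theorem h_extra_integrability
    (f : ℝ → ℝ) (hf_meas : Measurable f) (hf_nonneg : ∀ x, 0 ≤ f x)
    (hf_int : Integrable f) (hf_mass : ∫ x, f x = 1)
    (p : ℝ) (hp : 1 < p) (hfp : MemLp f (ENNReal.ofReal p))
    (h : ℝ → ℝ)
    (hh : ∀ u : ℝ, h u = if 0 < u then (f (Real.sqrt u) + f (-Real.sqrt u)) / (2 * Real.sqrt u)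
      else 0)
    (p' : ℝ) (hp'1 : 1 < p') (hp'2 : p' < 2 * p / (1 + p)) :
    MemLp h (ENNReal.ofReal p') :=
  h_extra_integrability_general f hf_meas hf_int p hp hfp h hh p' hp'1 hp'2
end

section
/- Let g : ℝ \ {0} → ℝ be continuous and suppose that for every x ≠ 0, g(x/n) → 0 as n → ∞ (n ranging over positive integers). Then g(x) → 0 as x → 0. -/
/-!
The continuous functions `y ↦ g (y / n)` converge to `0` pointwise on `(0, ∞)`, so by Baire's
theorem they are eventually uniformly small (say `≤ ε`) on some interval `(a, b)` with
`0 < a < b`. The intervals `(a / n, b / n)` overlap once `n` is large, so for `n ≥ N` they cover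
a whole interval `(0, δ)`, on which therefore `|g| ≤ ε`. The left limit follows by applying this
to `x ↦ g (-x)`.
-/

open Filter Topology Set

/-- Osgood's theorem. -/
theorem exists_isOpen_eventually_abs_le_of_tendsto_zero {X : Type*} [TopologicalSpace X]
    [BaireSpace X] [Nonempty X] {f : ℕ → X → ℝ} (hf : ∀ n, Continuous (f n))
    (hlim : ∀ x, Tendsto (fun n => f n x) atTop (𝓝 0)) {ε : ℝ} (hε : 0 < ε) :
    ∃ U : Set X, IsOpen U ∧ U.Nonempty ∧ ∃ N, ∀ n ≥ N, ∀ x ∈ U, |f n x| ≤ ε := by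
  set F : ℕ → Set X := fun N => ⋂ n ≥ N, {x | |f n x| ≤ ε}
  have hF_closed (N : ℕ) : IsClosed (F N) :=
    isClosed_biInter fun n _ => isClosed_le (hf n).abs continuous_const
  have hF_cover : ⋃ N, F N = univ := by
    refine eq_univ_of_forall fun x => mem_iUnion.2 ?_
    obtain ⟨N, hN⟩ :=
      eventually_atTop.1 ((hlim x).eventually (Icc_mem_nhds (neg_lt_zero.2 hε) hε))
    exact ⟨N, mem_iInter₂.2 fun n hn => abs_le.2 (hN n hn)⟩
  obtain ⟨N, hN⟩ := nonempty_interior_of_iUnion_of_closed hF_closed hF_cover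
  exact ⟨interior (F N), isOpen_interior, hN, N, fun n hn x hx =>
    mem_iInter₂.1 (interior_subset hx) n hn⟩

theorem eventually_exists_succ_mul_mem_Ioo {a b : ℝ} (ha : 0 < a) (hab : a < b) (N : ℕ) :
    ∀ᶠ x in 𝓝[>] 0, ∃ n ≥ N, ((n : ℝ) + 1) * x ∈ Ioo a b := by
  have hδ : 0 < min (b - a) (a / (N + 1)) := lt_min (sub_pos.2 hab) (by positivity)
  filter_upwards [self_mem_nhdsWithin, nhdsWithin_le_nhds (eventually_lt_nhds hδ)] with x hx hxδ
  rw [mem_Ioi] at hx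
  rw [lt_min_iff, lt_div_iff₀ (by positivity)] at hxδ
  -- The witness is `n = ⌊a / x⌋₊`, for which `(n + 1) * x ∈ (a, a + x]`.
  have hfloor_le : (⌊a / x⌋₊ : ℝ) ≤ a / x := Nat.floor_le (by positivity)
  have hlt_floor : a / x < ⌊a / x⌋₊ + 1 := Nat.lt_floor_add_one _
  refine ⟨⌊a / x⌋₊, Nat.le_floor ?_, ?_, ?_⟩
  · rw [le_div_iff₀ hx]; nlinarith
  · rwa [div_lt_iff₀ hx] at hlt_floor
  · rw [le_div_iff₀ hx] at hfloor_le; linarith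

theorem tendsto_nhdsGT_zero_of_tendsto_along_divisions {g : ℝ → ℝ}
    (hg : ContinuousOn g (Ioi 0))
    (h : ∀ x > 0, Tendsto (fun n : ℕ => g (x / n)) atTop (𝓝 0)) :
    Tendsto g (𝓝[>] 0) (𝓝 0) := by
  have : BaireSpace (Ioi (0 : ℝ)) := isOpen_Ioi.baireSpace
  have : Nonempty (Ioi (0 : ℝ)) := ⟨⟨1, mem_Ioi.2 one_pos⟩⟩
  set f : ℕ → Ioi (0 : ℝ) → ℝ := fun n y => g (y / (n + 1))
  have hf (n : ℕ) : Continuous (f n) :=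
    hg.comp_continuous (continuous_subtype_val.div_const _) fun y =>
      mem_Ioi.2 (div_pos y.2 n.cast_add_one_pos)
  have hlim (y : Ioi (0 : ℝ)) : Tendsto (fun n => f n y) atTop (𝓝 0) := by
    simpa [f] using (tendsto_add_atTop_iff_nat 1).2 (h y y.2)
  refine Metric.tendsto_nhds.2 fun ε hε => ?_
  obtain ⟨U, hU, ⟨p, hpU⟩, N, hN⟩ :=
    exists_isOpen_eventually_abs_le_of_tendsto_zero hf hlim (half_pos hε)
  obtain ⟨b, hpb, hIco⟩ := exists_Ico_subset_of_mem_nhds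
    ((isOpen_Ioi.isOpenMap_subtype_val U hU).mem_nhds (mem_image_of_mem _ hpU)) ⟨p + 1, by simp⟩
  filter_upwards [eventually_exists_succ_mul_mem_Ioo p.2 hpb N] with x ⟨n, hn, hx⟩
  obtain ⟨y, hyU, hy⟩ := hIco (Ioo_subset_Ico_self hx)
  have hgx : g x = f n y := by
    simp only [f, hy, mul_div_cancel_left₀ x n.cast_add_one_ne_zero]
  rw [Real.dist_eq, sub_zero, hgx]
  exact (hN n hn y hyU).trans_lt (half_lt_self hε)

/-- If `g` is continuous on `ℝ \ {0}` and `g(x/n) → 0` as `n → ∞` for every `x ≠ 0`,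
then `g(x) → 0` as `x → 0`. -/
theorem tendsto_zero_of_tendsto_along_divisions
    (g : ℝ → ℝ) (hg : ContinuousOn g {0}ᶜ)
    (h : ∀ x : ℝ, x ≠ 0 → Tendsto (fun n : ℕ => g (x / n)) atTop (𝓝 0)) :
    Tendsto g (𝓝[≠] 0) (𝓝 0) := by
  have hright : Tendsto g (𝓝[>] 0) (𝓝 0) :=
    tendsto_nhdsGT_zero_of_tendsto_along_divisions (hg.mono fun x hx => ne_of_gt hx)
      fun x hx => h x hx.ne'
  have hleft : Tendsto (fun x => g (-x)) (𝓝[>] 0) (𝓝 0) := by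
    refine tendsto_nhdsGT_zero_of_tendsto_along_divisions
      (hg.comp continuous_neg.continuousOn fun x hx => neg_ne_zero.2 (ne_of_gt hx)) fun x hx => ?_
    simpa [neg_div] using h (-x) (neg_ne_zero.2 hx.ne')
  have hneg : Tendsto Neg.neg (𝓝[<] (0 : ℝ)) (𝓝[>] 0) := by
    simpa using tendsto_neg_nhdsLT (a := (0 : ℝ))
  rw [← nhdsLT_sup_nhdsGT, tendsto_sup]
  exact ⟨by simpa [Function.comp_def] using hleft.comp hneg, hright⟩
end

section
/- Let ĝ : ℝ → ℂ be continuous with ĝ(0) = 1, |ĝ(ξ)| ≤ 1 for all ξ, and suppose there exist σ > 0, 1 < α < 2, β ∈ ℝ such that for every ξ ≠ 0, n·(ĝ(ξ/n^{1/α}) − 1) → −σ|ξ|^α (1 + iβ·sgn(ξ)·tan(πα/2)) as n → ∞. Then the function η(ξ) := ĝ(ξ) − 1 + σ|ξ|^α (1 + iβ·sgn(ξ)·tan(πα/2)) satisfies: η(ξ)/|ξ|^α is bounded on ℝ \ {0} and η(ξ)/|ξ|^α → 0 as ξ → 0. -/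
/-!
Write `F t = (ĝ t - 1) / |t|^α`. Since `|ξ n^(-1/α)|^α = |ξ|^α / n`, the NDA condition says that
`F (ξ n^(-1/α)) → -σ (1 ± iβ tan(πα/2))` for every `ξ > 0` (resp. `ξ < 0`), and the vanishing of
`η ξ / |ξ|^α` at `0` is the statement that these limits hold along `t → 0±`. This upgrade is Croft's
lemma: `F` is continuous away from `0` and `(n+1)^(-1/α) / n^(-1/α) → 1`, so by Baire category the
sequential bound holds uniformly for `ξ` in some interval `[a, b]` and large `n`, and the dilates
`[a, b] · n^(-1/α)` eventually overlap and cover a punctured neighbourhood of `0`. Away from `0`,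
`|ĝ| ≤ 1` bounds `η ξ / |ξ|^α`.
-/

open Filter Topology Real Set

section Croft

variable {E : Type*} [PseudoMetricSpace E] {G : ℝ → E} {L : E} {r : ℕ → ℝ}

lemma exists_Icc_forall_dist_le (hG : ContinuousOn G (Ioi 0)) (hr : ∀ n, 0 < r n)
    (h : ∀ ξ, 0 < ξ → Tendsto (fun n => G (ξ * r n)) atTop (𝓝 L)) {ε : ℝ} (hε : 0 < ε) :
    ∃ a b k, 0 < a ∧ a < b ∧ ∀ ξ ∈ Icc a b, ∀ n ≥ k, dist (G (ξ * r n)) L ≤ ε := by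
  have : BaireSpace (Ioi (0 : ℝ)) := isOpen_Ioi.baireSpace
  have : Nonempty (Ioi (0 : ℝ)) := ⟨⟨1, mem_Ioi.2 one_pos⟩⟩
  set S : ℕ → Set (Ioi (0 : ℝ)) := fun k => {x | ∀ n ≥ k, dist (G (x * r n)) L ≤ ε}
  have hS_closed : ∀ k, IsClosed (S k) := by
    intro k
    simp only [S, ofPred_forall]
    refine isClosed_iInter fun n => isClosed_iInter fun _ => isClosed_le ?_ continuous_const
    exact (hG.comp_continuous (continuous_subtype_val.mul continuous_const)
      fun x => mul_pos x.2 (hr n)).dist continuous_const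
  have hS_cover : ⋃ k, S k = univ := by
    refine eq_univ_of_forall fun x => mem_iUnion.2 ?_
    exact eventually_atTop.1 ((h x x.2).eventually (Metric.closedBall_mem_nhds L hε))
  obtain ⟨k, x, hx⟩ := nonempty_interior_of_iUnion_of_closed hS_closed hS_cover
  obtain ⟨s, hs, hball⟩ := Metric.mem_nhds_iff.1 (mem_interior_iff_mem_nhds.1 hx)
  refine ⟨x, x + s / 2, k, x.2, by linarith, fun ξ hξ n hn => ?_⟩
  refine hball (a := ⟨ξ, mem_Ioi.2 (lt_of_lt_of_le x.2 hξ.1)⟩) ?_ n hn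
  rw [Metric.mem_ball, Subtype.dist_eq, Real.dist_eq, abs_lt]
  constructor <;> linarith [hξ.1, hξ.2]

lemma eventually_exists_mem_Icc_mul_eq (hr : ∀ n, 0 < r n) (hr_lim : Tendsto r atTop (𝓝 0))
    (hr_ratio : Tendsto (fun n => r (n + 1) / r n) atTop (𝓝 1)) {a b : ℝ} (ha : 0 < a)
    (hab : a < b) (k : ℕ) :
    ∀ᶠ t in 𝓝[>] 0, ∃ ξ ∈ Icc a b, ∃ n ≥ k, ξ * r n = t := by
  have hb : 0 < b := ha.trans hab
  obtain ⟨N, hN_ge, hN⟩ : ∃ N ≥ k, ∀ n ≥ N, a * r n ≤ b * r (n + 1) := by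
    have hratio := hr_ratio.eventually (eventually_gt_nhds ((div_lt_one hb).2 hab))
    obtain ⟨N, hN⟩ := eventually_atTop.1 hratio
    refine ⟨max N k, le_max_right _ _, fun n hn => ?_⟩
    have := hN n (le_of_max_le_left hn)
    rw [div_lt_div_iff₀ hb (hr n)] at this
    linarith
  filter_upwards [Ioo_mem_nhdsGT (mul_pos ha (hr N))] with t ht
  classical
  have hP : ∃ n, N ≤ n ∧ a * r n ≤ t := by
    have hsmall := (hr_lim.const_mul a).eventually (eventually_lt_nhds (by simpa using ht.1))
    obtain ⟨n, hn, hn_ge⟩ := (hsmall.and (eventually_ge_atTop N)).exists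
    exact ⟨n, hn_ge, hn.le⟩
  -- the least `n₀ ≥ N` with `a * r n₀ ≤ t` exceeds `N`, so `t < a * r (n₀ - 1) ≤ b * r n₀`
  set n₀ := Nat.find hP
  obtain ⟨hn₀_ge, hn₀⟩ : N ≤ n₀ ∧ a * r n₀ ≤ t := Nat.find_spec hP
  have hn₀_ne : n₀ ≠ N := fun h => by rw [h] at hn₀; linarith [ht.2]
  have hprev : t < a * r (n₀ - 1) := by
    by_contra! hle
    exact Nat.find_min hP (m := n₀ - 1) (by omega) ⟨by omega, hle⟩
  have hover : a * r (n₀ - 1) ≤ b * r n₀ := by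
    simpa [Nat.sub_add_cancel (show 1 ≤ n₀ by omega)] using hN (n₀ - 1) (by omega)
  refine ⟨t / r n₀, ⟨(le_div_iff₀ (hr n₀)).2 hn₀, (div_le_iff₀ (hr n₀)).2 (by linarith)⟩,
    n₀, hN_ge.trans hn₀_ge, div_mul_cancel₀ t (hr n₀).ne'⟩

theorem tendsto_nhdsGT_zero_of_forall_tendsto_mul (hG : ContinuousOn G (Ioi 0))
    (hr : ∀ n, 0 < r n) (hr_lim : Tendsto r atTop (𝓝 0))
    (hr_ratio : Tendsto (fun n => r (n + 1) / r n) atTop (𝓝 1))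
    (h : ∀ ξ, 0 < ξ → Tendsto (fun n => G (ξ * r n)) atTop (𝓝 L)) :
    Tendsto G (𝓝[>] 0) (𝓝 L) := by
  refine Metric.tendsto_nhds.2 fun ε hε => ?_
  obtain ⟨a, b, k, ha, hab, hk⟩ := exists_Icc_forall_dist_le hG hr h (half_pos hε)
  filter_upwards [eventually_exists_mem_Icc_mul_eq hr hr_lim hr_ratio ha hab k]
    with t ⟨ξ, hξ, n, hn, hξt⟩
  rw [← hξt]
  exact (hk ξ hξ n hn).trans_lt (half_lt_self hε)

end Croft

-- shifted by one so that every term is positive: `(0 : ℝ) ^ (1 / α) = 0`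
noncomputable def rootInvSeq (α : ℝ) (n : ℕ) : ℝ := (((n + 1 : ℕ) : ℝ) ^ (1 / α))⁻¹

lemma rootInvSeq_pos (α : ℝ) (n : ℕ) : 0 < rootInvSeq α n :=
  inv_pos.2 (rpow_pos_of_pos (by positivity) _)

lemma tendsto_rootInvSeq {α : ℝ} (hα : 0 < α) : Tendsto (rootInvSeq α) atTop (𝓝 0) :=
  ((tendsto_rpow_atTop (one_div_pos.2 hα)).comp
    (tendsto_natCast_atTop_atTop.comp (tendsto_add_atTop_nat 1))).inv_tendsto_atTop

lemma tendsto_rootInvSeq_succ_div (α : ℝ) :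
    Tendsto (fun n => rootInvSeq α (n + 1) / rootInvSeq α n) atTop (𝓝 1) := by
  have h : Tendsto (fun n : ℕ => ((n + 1 : ℕ) : ℝ) / (((n + 1 : ℕ) : ℝ) + 1)) atTop (𝓝 1) :=
    (tendsto_natCast_div_add_atTop (1 : ℝ)).comp (tendsto_add_atTop_nat 1)
  have h' := h.rpow_const (p := 1 / α) (Or.inl one_ne_zero)
  rw [one_rpow] at h'
  refine h'.congr fun n => ?_
  rw [rootInvSeq, rootInvSeq, inv_div_inv, ← div_rpow (by positivity) (by positivity)]
  push_cast
  ring_nf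

lemma abs_mul_rootInvSeq_rpow {α : ℝ} (hα : α ≠ 0) (ξ : ℝ) (n : ℕ) :
    |ξ * rootInvSeq α n| ^ α = |ξ| ^ α / (n + 1) := by
  have hn : (0 : ℝ) < ((n + 1 : ℕ) : ℝ) := by positivity
  rw [abs_mul, abs_of_pos (rootInvSeq_pos α n), mul_rpow (abs_nonneg _) (rootInvSeq_pos α n).le,
    rootInvSeq, inv_rpow (rpow_nonneg hn.le _), ← rpow_mul hn.le, one_div_mul_cancel hα, rpow_one]
  push_cast
  ring

lemma tendsto_div_rpow_mul_rootInvSeq {f : ℝ → ℂ} {α ξ : ℝ} {c : ℂ} (hα : α ≠ 0) (hξ : ξ ≠ 0)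
    (h : Tendsto (fun n : ℕ => (n : ℂ) * f (ξ / (n : ℝ) ^ (1 / α))) atTop
      (𝓝 (((|ξ| ^ α : ℝ) : ℂ) * c))) :
    Tendsto (fun n => f (ξ * rootInvSeq α n) / ((|ξ * rootInvSeq α n| ^ α : ℝ) : ℂ)) atTop
      (𝓝 c) := by
  have hξα : ((|ξ| ^ α : ℝ) : ℂ) ≠ 0 := by exact_mod_cast (rpow_pos_of_pos (abs_pos.2 hξ) α).ne'
  have hshift := ((h.comp (tendsto_add_atTop_nat 1)).div_const ((|ξ| ^ α : ℝ) : ℂ))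
  rw [mul_div_cancel_left₀ _ hξα] at hshift
  refine hshift.congr fun n => ?_
  rw [abs_mul_rootInvSeq_rpow hα, rootInvSeq, ← div_eq_mul_inv]
  simp only [Function.comp_apply]
  push_cast
  field_simp

lemma tendsto_div_rpow_nhdsGT_zero {f : ℝ → ℂ} {α : ℝ} {c : ℂ} (hf : ContinuousOn f (Ioi 0))
    (hα : 0 < α)
    (h : ∀ ξ, 0 < ξ → Tendsto (fun n : ℕ => (n : ℂ) * f (ξ / (n : ℝ) ^ (1 / α))) atTop
      (𝓝 (((|ξ| ^ α : ℝ) : ℂ) * c))) :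
    Tendsto (fun t => f t / ((|t| ^ α : ℝ) : ℂ)) (𝓝[>] 0) (𝓝 c) := by
  refine tendsto_nhdsGT_zero_of_forall_tendsto_mul ?_ (rootInvSeq_pos α) (tendsto_rootInvSeq hα)
    (tendsto_rootInvSeq_succ_div α)
    fun ξ hξ => tendsto_div_rpow_mul_rootInvSeq hα.ne' hξ.ne' (h ξ hξ)
  refine hf.div (Complex.continuous_ofReal.comp_continuousOn
    (continuous_abs.continuousOn.rpow_const fun _ _ => Or.inr hα.le)) fun t ht => ?_
  exact_mod_cast (rpow_pos_of_pos (abs_pos.2 (ne_of_gt ht)) α).ne'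

lemma tendsto_div_rpow_nhdsLT_zero {f : ℝ → ℂ} {α : ℝ} {c : ℂ} (hf : ContinuousOn f (Iio 0))
    (hα : 0 < α)
    (h : ∀ ξ, ξ < 0 → Tendsto (fun n : ℕ => (n : ℂ) * f (ξ / (n : ℝ) ^ (1 / α))) atTop
      (𝓝 (((|ξ| ^ α : ℝ) : ℂ) * c))) :
    Tendsto (fun t => f t / ((|t| ^ α : ℝ) : ℂ)) (𝓝[<] 0) (𝓝 c) := by
  have hneg : Tendsto (fun t => f (-t) / ((|t| ^ α : ℝ) : ℂ)) (𝓝[>] 0) (𝓝 c) := by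
    refine tendsto_div_rpow_nhdsGT_zero
      (hf.comp continuous_neg.continuousOn fun t (ht : 0 < t) => neg_lt_zero.2 ht) hα fun ξ hξ => ?_
    simpa only [neg_div, abs_neg] using h (-ξ) (neg_lt_zero.2 hξ)
  have hflip : Tendsto Neg.neg (𝓝[<] (0 : ℝ)) (𝓝[>] 0) := by
    simpa using tendsto_neg_nhdsLT (a := (0 : ℝ))
  refine (hneg.comp hflip).congr fun t => ?_
  simp only [Function.comp_apply, neg_neg, abs_neg]

noncomputable def stableSkew (α β ξ : ℝ) : ℂ :=
  1 + Complex.I * (β : ℂ) * ((Real.sign ξ) : ℂ) * ((Real.tan (π * α / 2)) : ℂ)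

lemma stableSkew_of_pos {α β ξ : ℝ} (hξ : 0 < ξ) : stableSkew α β ξ = stableSkew α β 1 := by
  rw [stableSkew, stableSkew, Real.sign_of_pos hξ, Real.sign_of_pos one_pos]

lemma stableSkew_of_neg {α β ξ : ℝ} (hξ : ξ < 0) : stableSkew α β ξ = stableSkew α β (-1) := by
  rw [stableSkew, stableSkew, Real.sign_of_neg hξ, Real.sign_of_neg neg_one_lt_zero]

lemma norm_stableSkew_le (α β ξ : ℝ) : ‖stableSkew α β ξ‖ ≤ 1 + |β| * |tan (π * α / 2)| := by
  have hsign : |Real.sign ξ| ≤ 1 := by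
    rcases Real.sign_apply_eq ξ with h | h | h <;> simp [h]
  calc ‖stableSkew α β ξ‖ ≤ 1 + |β| * |Real.sign ξ| * |tan (π * α / 2)| := by
        refine (norm_add_le _ _).trans_eq ?_
        simp only [norm_one, norm_mul, Complex.norm_I, Complex.norm_real, Real.norm_eq_abs, one_mul]
    _ ≤ 1 + |β| * 1 * |tan (π * α / 2)| := by gcongr
    _ = 1 + |β| * |tan (π * α / 2)| := by ring

lemma norm_add_mul_div_rpow_eq {z w : ℂ} {σ α x : ℝ} (hx : 0 < x) :
    ‖z + ((σ * x ^ α : ℝ) : ℂ) * w‖ / x ^ α = ‖z / ((x ^ α : ℝ) : ℂ) - -(σ * w)‖ := by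
  have hxα : 0 < x ^ α := rpow_pos_of_pos hx α
  have hxα' : ((x ^ α : ℝ) : ℂ) ≠ 0 := by exact_mod_cast hxα.ne'
  have hquot : z / ((x ^ α : ℝ) : ℂ) + σ * w =
      (z + ((σ * x ^ α : ℝ) : ℂ) * w) / ((x ^ α : ℝ) : ℂ) := by
    push_cast
    field_simp
  rw [sub_neg_eq_add, hquot, norm_div, Complex.norm_real, Real.norm_of_nonneg hxα.le]

lemma norm_add_mul_div_rpow_le (z w : ℂ) {σ α x : ℝ} (hx : 0 < x) :
    ‖z + ((σ * x ^ α : ℝ) : ℂ) * w‖ / x ^ α ≤ ‖z‖ / x ^ α + |σ| * ‖w‖ := by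
  have hxα : 0 < x ^ α := rpow_pos_of_pos hx α
  calc ‖z + ((σ * x ^ α : ℝ) : ℂ) * w‖ / x ^ α ≤ (‖z‖ + |σ| * x ^ α * ‖w‖) / x ^ α := by
        gcongr
        refine (norm_add_le _ _).trans_eq ?_
        rw [norm_mul, Complex.norm_real, Real.norm_eq_abs, abs_mul, abs_of_pos hxα]
    _ = ‖z‖ / x ^ α + |σ| * ‖w‖ := by field_simp

lemma tendsto_norm_add_stable_div_rpow {f : ℝ → ℂ} {σ α β : ℝ} (hf : ContinuousOn f {0}ᶜ)
    (hα : 0 < α)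
    (h : ∀ ξ : ℝ, ξ ≠ 0 → Tendsto (fun n : ℕ => (n : ℂ) * f (ξ / (n : ℝ) ^ (1 / α))) atTop
      (𝓝 (-((σ * |ξ| ^ α : ℝ) : ℂ) * stableSkew α β ξ))) :
    Tendsto (fun ξ => ‖f ξ + ((σ * |ξ| ^ α : ℝ) : ℂ) * stableSkew α β ξ‖ / |ξ| ^ α)
      (𝓝[≠] 0) (𝓝 0) := by
  have hlimit : ∀ ξ, -((σ * |ξ| ^ α : ℝ) : ℂ) * stableSkew α β ξ =
      ((|ξ| ^ α : ℝ) : ℂ) * -(σ * stableSkew α β ξ) := fun ξ => by push_cast; ring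
  have hright : Tendsto (fun t => f t / ((|t| ^ α : ℝ) : ℂ)) (𝓝[>] 0)
      (𝓝 (-(σ * stableSkew α β 1))) := by
    refine tendsto_div_rpow_nhdsGT_zero (hf.mono fun t ht => ne_of_gt ht) hα fun ξ hξ => ?_
    rw [← stableSkew_of_pos hξ, ← hlimit]
    exact h ξ hξ.ne'
  have hleft : Tendsto (fun t => f t / ((|t| ^ α : ℝ) : ℂ)) (𝓝[<] 0)
      (𝓝 (-(σ * stableSkew α β (-1)))) := by
    refine tendsto_div_rpow_nhdsLT_zero (hf.mono fun t ht => ne_of_lt ht) hα fun ξ hξ => ?_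
    rw [← stableSkew_of_neg hξ, ← hlimit]
    exact h ξ hξ.ne
  rw [← nhdsLT_sup_nhdsGT, tendsto_sup]
  constructor
  · refine (tendsto_iff_norm_sub_tendsto_zero.1 hleft).congr' ?_
    filter_upwards [self_mem_nhdsWithin] with ξ (hξ : ξ < 0)
    rw [norm_add_mul_div_rpow_eq (abs_pos.2 hξ.ne), stableSkew_of_neg hξ]
  · refine (tendsto_iff_norm_sub_tendsto_zero.1 hright).congr' ?_
    filter_upwards [self_mem_nhdsWithin] with ξ (hξ : 0 < ξ)
    rw [norm_add_mul_div_rpow_eq (abs_pos.2 hξ.ne'), stableSkew_of_pos hξ]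

lemma exists_forall_ne_le_of_tendsto {u : ℝ → ℝ} {l : ℝ} (h : Tendsto u (𝓝[≠] 0) (𝓝 l))
    (hfar : ∀ δ > 0, ∃ C, ∀ ξ, δ ≤ |ξ| → u ξ ≤ C) : ∃ C, ∀ ξ ≠ 0, u ξ ≤ C := by
  obtain ⟨δ, hδ, hnear⟩ := Metric.mem_nhdsWithin_iff.1 ((Metric.tendsto_nhds.1 h) 1 one_pos)
  obtain ⟨C, hC⟩ := hfar δ hδ
  refine ⟨max (l + 1) C, fun ξ hξ => ?_⟩
  rcases lt_or_ge |ξ| δ with hξδ | hξδ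
  · have := hnear ⟨by simpa [Real.dist_eq] using hξδ, hξ⟩
    rw [mem_ofPred_eq, Real.dist_eq] at this
    exact le_max_of_le_left (by linarith [le_abs_self (u ξ - l)])
  · exact le_max_of_le_right (hC ξ hξδ)

theorem nda_implies_fda_general
    (gHat : ℝ → ℂ) (hcont : Continuous gHat) (hbdd : ∀ ξ, ‖gHat ξ‖ ≤ 1)
    (σ α β : ℝ) (hα1 : 1 < α)
    (hNDA : ∀ ξ : ℝ, ξ ≠ 0 →
      Tendsto (fun n : ℕ => (n : ℂ) * (gHat (ξ / (n : ℝ) ^ (1 / α)) - 1)) atTop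
        (𝓝 (-((σ * |ξ| ^ α : ℝ) : ℂ) *
            (1 + Complex.I * (β : ℂ) * ((Real.sign ξ) : ℂ) * ((Real.tan (π * α / 2)) : ℂ))))) :
    (∃ C : ℝ, ∀ ξ : ℝ, ξ ≠ 0 →
        ‖gHat ξ - 1 + ((σ * |ξ| ^ α : ℝ) : ℂ) *
            (1 + Complex.I * (β : ℂ) * ((Real.sign ξ) : ℂ) * ((Real.tan (π * α / 2)) : ℂ))‖
          / |ξ| ^ α ≤ C) ∧
    Tendsto (fun ξ : ℝ =>
        ‖gHat ξ - 1 + ((σ * |ξ| ^ α : ℝ) : ℂ) *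
            (1 + Complex.I * (β : ℂ) * ((Real.sign ξ) : ℂ) * ((Real.tan (π * α / 2)) : ℂ))‖
          / |ξ| ^ α) (𝓝[≠] 0) (𝓝 0) := by
  have hα : 0 < α := by linarith
  have hlim := tendsto_norm_add_stable_div_rpow (f := fun ξ => gHat ξ - 1) (β := β)
    (hcont.sub continuous_const).continuousOn hα hNDA
  refine ⟨exists_forall_ne_le_of_tendsto hlim fun δ hδ => ?_, hlim⟩
  refine ⟨2 / δ ^ α + |σ| * (1 + |β| * |tan (π * α / 2)|), fun ξ hξ => ?_⟩
  have hξ0 : 0 < |ξ| := hδ.trans_le hξ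
  have hg : ‖gHat ξ - 1‖ ≤ 2 := (norm_sub_le _ _).trans (by rw [norm_one]; linarith [hbdd ξ])
  calc _ ≤ ‖gHat ξ - 1‖ / |ξ| ^ α + |σ| * ‖stableSkew α β ξ‖ :=
        norm_add_mul_div_rpow_le _ _ hξ0
    _ ≤ 2 / δ ^ α + |σ| * (1 + |β| * |tan (π * α / 2)|) := by
        gcongr
        exact norm_stableSkew_le α β ξ

/-- NDA implies FDA: if the characteristic function `gHat` satisfies the NDA limit condition
for an α-stable law, then the remainder `η(ξ) = gHat(ξ) − 1 + σ|ξ|^α(1+iβ sgn(ξ) tan(πα/2))`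
satisfies `η(ξ)/|ξ|^α` bounded and tending to `0` as `ξ → 0`. -/
theorem nda_implies_fda
    (gHat : ℝ → ℂ) (hcont : Continuous gHat) (h0 : gHat 0 = 1) (hbdd : ∀ ξ, ‖gHat ξ‖ ≤ 1)
    (σ α β : ℝ) (hσ : 0 < σ) (hα1 : 1 < α) (hα2 : α < 2)
    (hNDA : ∀ ξ : ℝ, ξ ≠ 0 →
      Tendsto (fun n : ℕ => (n : ℂ) * (gHat (ξ / (n : ℝ) ^ (1 / α)) - 1)) atTop
        (𝓝 (-((σ * |ξ| ^ α : ℝ) : ℂ) *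
            (1 + Complex.I * (β : ℂ) * ((Real.sign ξ) : ℂ) * ((Real.tan (π * α / 2)) : ℂ))))) :
    (∃ C : ℝ, ∀ ξ : ℝ, ξ ≠ 0 →
        ‖gHat ξ - 1 + ((σ * |ξ| ^ α : ℝ) : ℂ) *
            (1 + Complex.I * (β : ℂ) * ((Real.sign ξ) : ℂ) * ((Real.tan (π * α / 2)) : ℂ))‖
          / |ξ| ^ α ≤ C) ∧
    Tendsto (fun ξ : ℝ =>
        ‖gHat ξ - 1 + ((σ * |ξ| ^ α : ℝ) : ℂ) *
            (1 + Complex.I * (β : ℂ) * ((Real.sign ξ) : ℂ) * ((Real.tan (π * α / 2)) : ℂ))‖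
          / |ξ| ^ α) (𝓝[≠] 0) (𝓝 0) :=
  nda_implies_fda_general gHat hcont hbdd σ α β hα1 hNDA
end

section
/- Let μ, ν be probability measures on a measurable space with μ absolutely continuous with respect to ν, and let B be a measurable set with ν(B) > 0. Then μ(B) ≤ 2H(μ|ν) / log(1 + H(μ|ν)/ν(B)), where H(μ|ν) = ∫ (dμ/dν) log(dμ/dν) dν is the relative entropy. -/
/-!
Write `f = dμ/dν`. The Fenchel–Young inequality `u v ≤ u log u - u + eᵛ` for `u ≥ 0`, applied with
`u = f` and `v = t 𝟙_B`, integrates to `t μ(B) ≤ H(μ|ν) + (eᵗ - 1) ν(B)`. Choosing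
`t = log (1 + H/ν(B))` makes the last term equal to `H`, so `t μ(B) ≤ 2H`.
-/

open MeasureTheory

lemma Real.mul_le_mul_log_sub_add_exp {u : ℝ} (hu : 0 ≤ u) (v : ℝ) :
    u * v ≤ u * Real.log u - u + Real.exp v := by
  rcases hu.eq_or_lt with rfl | hu
  · simpa using (Real.exp_pos v).le
  · have h := Real.add_one_le_exp (v - Real.log u)
    rw [Real.exp_sub, Real.exp_log hu, le_div_iff₀ hu] at h
    linarith

section

variable {X : Type*} [MeasurableSpace X] {μ ν : Measure X}

theorem integral_le_integral_mul_log_rnDeriv_sub_add_integral_exp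
    [IsFiniteMeasure μ] [SigmaFinite ν] (hμν : μ ≪ ν)
    (hint : Integrable (fun x => (μ.rnDeriv ν x).toReal * Real.log (μ.rnDeriv ν x).toReal) ν)
    {g : X → ℝ} (hg : Integrable g μ) (hexp : Integrable (fun x => Real.exp (g x)) ν) :
    ∫ x, g x ∂μ ≤ ∫ x, (μ.rnDeriv ν x).toReal * Real.log (μ.rnDeriv ν x).toReal ∂ν
      - μ.real Set.univ + ∫ x, Real.exp (g x) ∂ν := by
  set f := fun x => (μ.rnDeriv ν x).toReal
  have hf : Integrable f ν := Measure.integrable_toReal_rnDeriv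
  calc ∫ x, g x ∂μ = ∫ x, f x * g x ∂ν := (integral_toReal_rnDeriv_mul hμν).symm
    _ ≤ ∫ x, (f x * Real.log (f x) - f x + Real.exp (g x)) ∂ν :=
      integral_mono ((integrable_toReal_rnDeriv_mul_iff hμν).2 hg) ((hint.sub hf).add hexp)
        fun x => Real.mul_le_mul_log_sub_add_exp ENNReal.toReal_nonneg (g x)
    _ = _ := by
      rw [integral_add (f := fun x => f x * Real.log (f x) - f x) (hint.sub hf) hexp,
        integral_sub hint hf, Measure.integral_toReal_rnDeriv hμν]

theorem mul_measureReal_le_integral_mul_log_rnDeriv_add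
    [IsFiniteMeasure μ] [IsFiniteMeasure ν] (hμν : μ ≪ ν)
    (hint : Integrable (fun x => (μ.rnDeriv ν x).toReal * Real.log (μ.rnDeriv ν x).toReal) ν)
    {B : Set X} (hB : MeasurableSet B) (t : ℝ) :
    t * μ.real B ≤ ∫ x, (μ.rnDeriv ν x).toReal * Real.log (μ.rnDeriv ν x).toReal ∂ν
      - μ.real Set.univ + ν.real Set.univ + (Real.exp t - 1) * ν.real B := by
  have hexp : (fun x => Real.exp (B.indicator (fun _ => t) x))
      = fun x => 1 + B.indicator (fun _ => Real.exp t - 1) x := by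
    ext x
    by_cases hx : x ∈ B <;> simp [hx]
  have h := integral_le_integral_mul_log_rnDeriv_sub_add_integral_exp hμν hint
    ((integrable_const t).indicator hB) (by rw [hexp]; fun_prop)
  rw [hexp, integral_add (integrable_const 1) ((integrable_const _).indicator hB),
    integral_indicator_const _ hB, integral_indicator_const _ hB] at h
  simp only [integral_const, smul_eq_mul, mul_one] at h
  linarith

end

/-- For probability measures `μ ≪ ν` with finite positive relative entropy `H(μ|ν)` and a
measurable set `B` with `ν(B) > 0`, one has
`μ(B) ≤ 2 H(μ|ν) / log(1 + H(μ|ν)/ν(B))`. -/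
theorem measure_le_of_relative_entropy
    {X : Type*} [MeasurableSpace X] (μ ν : Measure X)
    [IsProbabilityMeasure μ] [IsProbabilityMeasure ν]
    (hac : μ ≪ ν)
    (hint : Integrable (fun x => (μ.rnDeriv ν x).toReal *
      Real.log (μ.rnDeriv ν x).toReal) ν)
    (H : ℝ)
    (hH : H = ∫ x, (μ.rnDeriv ν x).toReal * Real.log (μ.rnDeriv ν x).toReal ∂ν)
    (hHpos : 0 < H)
    (B : Set X) (hB : MeasurableSet B) (hνB : 0 < (ν B).toReal) :
    (μ B).toReal ≤ 2 * H / Real.log (1 + H / (ν B).toReal) := by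
  simp only [← measureReal_def] at hνB ⊢
  set t := Real.log (1 + H / ν.real B)
  have ht : 0 < t := Real.log_pos (by simp only [lt_add_iff_pos_right]; positivity)
  have hexp : (Real.exp t - 1) * ν.real B = H := by
    rw [Real.exp_log (by positivity)]
    field_simp
    ring
  have h := mul_measureReal_le_integral_mul_log_rnDeriv_add hac hint hB t
  rw [← hH, hexp, probReal_univ, probReal_univ] at h
  rw [le_div_iff₀ ht]
  linarith
end

section
/- Let μ be a probability measure on ℝ, C_S > 0, 1 < α < 2, and suppose there exist R > 0 and 0 < ε < 1 such that for all x > R, (1−ε) C_S x^{2−α} ≤ ∫_{−√x}^{√x} v⁴ dμ(v) ≤ (1+ε) C_S x^{2−α}. Then ∫_ℝ |v|^{1+α} dμ(v) ≤ ((3−α)/(2^{3−α}−1)) ( 32 R^{(α+1)/2} + C_S ((1+ε)2^{4−2α} − (1−ε)) ∫_{√R}^∞ x^{−α} dx ) < ∞. -/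
/-!
Writing `|v| ^ (1 + α) = (3 - α) / 2 * v ^ 4 * ∫ x in Ioi (v ^ 2), x ^ ((α - 5) / 2)` and applying
Tonelli turns the moment into `∫ x in Ioi 0, (3 - α) / 2 * x ^ ((α - 5) / 2) * F x`, where
`F x = ∫ v in Icc (-√x) √x, v ^ 4 ∂μ`. Bounding `F x` by `2 * x ^ 2` on `(0, R]` and by
`(1 + ε) * C_S * x ^ (2 - α)` beyond `R` gives an explicit bound, which the constant of the
statement dominates: the lower asymptotic bound at `2 * R` together with `F x ≤ 2 * x ^ 2` forces
`(1 - ε) * C_S ≤ 8 * R ^ α`, and `4 - 2 ^ (3 - α) ≤ 3 * (α - 1)` controls the one term of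
unfavourable sign.
-/

open MeasureTheory Set Real

lemma lintegral_Ioi_rpow {a c : ℝ} (ha : a < -1) (hc : 0 < c) :
    ∫⁻ x in Ioi c, ENNReal.ofReal (x ^ a) = ENNReal.ofReal (c ^ (a + 1) / -(a + 1)) := by
  rw [← ofReal_integral_eq_lintegral_ofReal (integrableOn_Ioi_rpow_of_lt ha hc),
    integral_Ioi_rpow_of_lt ha hc, neg_div, div_neg]
  filter_upwards [ae_restrict_mem measurableSet_Ioi] with x hx
  exact rpow_nonneg (hc.trans hx).le a

lemma lintegral_Ioc_zero_rpow {a c : ℝ} (ha : -1 < a) (hc : 0 ≤ c) :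
    ∫⁻ x in Ioc 0 c, ENNReal.ofReal (x ^ a) = ENNReal.ofReal (c ^ (a + 1) / (a + 1)) := by
  have hint : IntegrableOn (fun x : ℝ => x ^ a) (Ioc 0 c) :=
    (intervalIntegrable_iff_integrableOn_Ioc_of_le hc).mp
      (intervalIntegral.intervalIntegrable_rpow' ha)
  rw [← ofReal_integral_eq_lintegral_ofReal hint, ← intervalIntegral.integral_of_le hc,
    integral_rpow (Or.inl ha), zero_rpow (by linarith), sub_zero]
  filter_upwards [ae_restrict_mem measurableSet_Ioc] with x hx
  exact rpow_nonneg hx.1.le a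

lemma ofReal_abs_rpow_eq_lintegral {p : ℝ} (hp0 : 0 < p) (hp4 : p < 4) (v : ℝ) :
    ENNReal.ofReal (|v| ^ p) = ∫⁻ x in Ioi 0,
      ENNReal.ofReal ((4 - p) / 2 * x ^ ((p - 6) / 2)) *
        (Icc (-√x) √x).indicator (fun w => ENNReal.ofReal (w ^ 4)) v := by
  rcases eq_or_ne v 0 with rfl | hv
  · simp [zero_rpow hp0.ne']
  have hv2 : 0 < v ^ 2 := by positivity
  have hkernel : ∀ x ∈ Ioi (0 : ℝ), ENNReal.ofReal ((4 - p) / 2 * x ^ ((p - 6) / 2)) *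
        (Icc (-√x) √x).indicator (fun w => ENNReal.ofReal (w ^ 4)) v
      = (Ici (v ^ 2)).indicator (fun x =>
          ENNReal.ofReal (x ^ ((p - 6) / 2)) * ENNReal.ofReal ((4 - p) / 2 * v ^ 4)) x := by
    intro x hx
    have hx0 : (0 : ℝ) < x := hx
    by_cases hvx : v ^ 2 ≤ x
    · rw [indicator_of_mem (mem_Icc.mpr ((Real.sq_le hx0.le).mp hvx)),
        indicator_of_mem (mem_Ici.mpr hvx),
        ← ENNReal.ofReal_mul (by positivity), ← ENNReal.ofReal_mul (rpow_nonneg hx0.le _)]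
      ring_nf
    · rw [indicator_of_notMem (fun h => hvx ((Real.sq_le hx0.le).mpr (mem_Icc.mp h))),
        indicator_of_notMem (fun h => hvx (mem_Ici.mp h)), mul_zero]
  rw [setLIntegral_congr_fun measurableSet_Ioi hkernel, lintegral_indicator measurableSet_Ici,
    Measure.restrict_restrict measurableSet_Ici, inter_eq_left.mpr (Ici_subset_Ioi.mpr hv2),
    setLIntegral_congr Ioi_ae_eq_Ici.symm, lintegral_mul_const' _ _ ENNReal.ofReal_ne_top,
    lintegral_Ioi_rpow (by linarith) hv2,
    ← ENNReal.ofReal_mul (div_nonneg (by positivity) (by linarith))]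
  have habs : (v ^ 2) ^ ((p - 6) / 2 + 1) * v ^ 4 = |v| ^ p := by
    rw [show v ^ 4 = (v ^ 2) ^ (2 : ℝ) by rw [rpow_two]; ring, ← rpow_add hv2, ← sq_abs,
      ← rpow_natCast, ← rpow_mul (abs_nonneg v)]
    congr 1; push_cast; ring
  have hp4' : 4 - p ≠ 0 := by linarith
  rw [← habs, show -((p - 6) / 2 + 1) = (4 - p) / 2 by ring]
  congr 1
  field_simp

noncomputable def truncFourthMoment (μ : Measure ℝ) (x : ℝ) : ℝ :=
  ∫ v in Icc (-√x) √x, v ^ 4 ∂μ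

lemma ofReal_truncFourthMoment (μ : Measure ℝ) [IsLocallyFiniteMeasure μ] (x : ℝ) :
    ENNReal.ofReal (truncFourthMoment μ x) = ∫⁻ v in Icc (-√x) √x, ENNReal.ofReal (v ^ 4) ∂μ :=
  ofReal_integral_eq_lintegral_ofReal (continuous_pow 4).integrableOn_Icc
    (ae_of_all _ fun v => by positivity)

lemma truncFourthMoment_nonneg (μ : Measure ℝ) (x : ℝ) : 0 ≤ truncFourthMoment μ x :=
  setIntegral_nonneg measurableSet_Icc fun v _ => by positivity

lemma lintegral_abs_rpow_eq_lintegral_truncFourthMoment (μ : Measure ℝ) [IsLocallyFiniteMeasure μ]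
    {p : ℝ} (hp0 : 0 < p) (hp4 : p < 4) :
    ∫⁻ v, ENNReal.ofReal (|v| ^ p) ∂μ =
      ∫⁻ x in Ioi 0, ENNReal.ofReal ((4 - p) / 2 * x ^ ((p - 6) / 2) * truncFourthMoment μ x) := by
  have hmeas : Measurable (Function.uncurry fun (v x : ℝ) =>
      ENNReal.ofReal ((4 - p) / 2 * x ^ ((p - 6) / 2)) *
        (Icc (-√x) √x).indicator (fun w => ENNReal.ofReal (w ^ 4)) v) := by
    simp only [Function.uncurry_def, indicator_apply, mem_Icc]
    refine Measurable.mul (by fun_prop) (Measurable.ite ?_ (by fun_prop) measurable_const)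
    exact (measurableSet_le (by fun_prop : Measurable fun q : ℝ × ℝ => -√q.2) measurable_fst).inter
      (measurableSet_le measurable_fst (by fun_prop : Measurable fun q : ℝ × ℝ => √q.2))
  simp_rw [ofReal_abs_rpow_eq_lintegral hp0 hp4, ENNReal.ofReal_mul' (truncFourthMoment_nonneg μ _),
    ofReal_truncFourthMoment, ← lintegral_indicator measurableSet_Icc]
  rw [lintegral_lintegral_swap hmeas.aemeasurable]
  congr 1 with x
  exact lintegral_const_mul _
    ((by fun_prop : Measurable fun w : ℝ => ENNReal.ofReal (w ^ 4)).indicator measurableSet_Icc)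

lemma ofReal_mul_rpow_mul_le {c e k M x y : ℝ} (hc : 0 ≤ c) (hx : 0 < x) (hy : y ≤ M * x ^ k) :
    ENNReal.ofReal (c * x ^ e * y) ≤ ENNReal.ofReal (c * M) * ENNReal.ofReal (x ^ (e + k)) := by
  rw [← ENNReal.ofReal_mul' (rpow_nonneg hx.le _)]
  refine ENNReal.ofReal_le_ofReal ?_
  calc c * x ^ e * y ≤ c * x ^ e * (M * x ^ k) := by gcongr
    _ = c * M * x ^ (e + k) := by rw [rpow_add hx]; ring

theorem lintegral_abs_rpow_one_add_le (μ : Measure ℝ) [IsLocallyFiniteMeasure μ] {α R K : ℝ}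
    (hα1 : 1 < α) (hα3 : α < 3) (hR : 0 < R) (hK : 0 ≤ K)
    (hsmall : ∀ x, 0 < x → x ≤ R → truncFourthMoment μ x ≤ 2 * x ^ 2)
    (hlarge : ∀ x, R < x → truncFourthMoment μ x ≤ K * x ^ (2 - α)) :
    ∫⁻ v, ENNReal.ofReal (|v| ^ (1 + α)) ∂μ ≤
      ENNReal.ofReal (2 * (3 - α) / (α + 1) * R ^ ((α + 1) / 2) +
        (3 - α) / (α - 1) * K * R ^ ((1 - α) / 2)) := by
  have hc : 0 ≤ (3 - α) / 2 := by linarith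
  rw [lintegral_abs_rpow_eq_lintegral_truncFourthMoment μ (by linarith) (by linarith),
    ← Ioc_union_Ioi_eq_Ioi hR.le, lintegral_union measurableSet_Ioi Ioc_disjoint_Ioi_same,
    show (4 - (1 + α)) / 2 = (3 - α) / 2 by ring, show (1 + α - 6) / 2 = (α - 5) / 2 by ring]
  calc _ ≤ (∫⁻ x in Ioc 0 R,
          ENNReal.ofReal ((3 - α) / 2 * 2) * ENNReal.ofReal (x ^ ((α - 5) / 2 + 2))) +
        ∫⁻ x in Ioi R,
          ENNReal.ofReal ((3 - α) / 2 * K) * ENNReal.ofReal (x ^ ((α - 5) / 2 + (2 - α))) :=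
        add_le_add
          (setLIntegral_mono' measurableSet_Ioc fun x hx => ofReal_mul_rpow_mul_le hc hx.1
            (by rw [rpow_two]; exact hsmall x hx.1 hx.2))
          (setLIntegral_mono' measurableSet_Ioi fun x hx => ofReal_mul_rpow_mul_le hc (hR.trans hx)
            (hlarge x hx))
    _ = _ := by
        rw [lintegral_const_mul' _ _ ENNReal.ofReal_ne_top,
          lintegral_const_mul' _ _ ENNReal.ofReal_ne_top,
          lintegral_Ioc_zero_rpow (by linarith) hR.le, lintegral_Ioi_rpow (by linarith) hR,
          show (α - 5) / 2 + 2 + 1 = (α + 1) / 2 by ring,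
          show (α - 5) / 2 + (2 - α) + 1 = (1 - α) / 2 by ring,
          show -((1 - α) / 2) = (α - 1) / 2 by ring,
          ← ENNReal.ofReal_mul (by positivity), ← ENNReal.ofReal_mul (by positivity),
          ← ENNReal.ofReal_add (by positivity)
            (mul_nonneg (by positivity) (div_nonneg (rpow_nonneg hR.le _) (by linarith)))]
        congr 1
        field_simp

lemma four_sub_two_rpow_three_sub_le {α : ℝ} (hα : 1 ≤ α) : 4 - 2 ^ (3 - α) ≤ 3 * (α - 1) := by
  have hexp := add_one_le_exp (log 2 * -(α - 1))
  have hsplit : (2 : ℝ) ^ (3 - α) = 4 * 2 ^ (-(α - 1)) := by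
    rw [show 3 - α = 2 + -(α - 1) by ring, rpow_add two_pos, rpow_two]; norm_num
  rw [hsplit, rpow_def_of_pos two_pos]
  nlinarith [log_two_lt_d9]

lemma le_eight_mul_rpow {a α R : ℝ} (hα : α ≤ 2) (hR : 0 < R)
    (h : a * (2 * R) ^ (2 - α) ≤ 2 * (2 * R) ^ 2) : a ≤ 8 * R ^ α := by
  have h2R : 0 < 2 * R := by linarith
  have hsplit : (2 * R) ^ 2 = (2 * R) ^ (2 - α) * (2 * R) ^ α := by
    rw [← rpow_add h2R, sub_add_cancel, rpow_two]
  have htwo : (2 : ℝ) ^ α ≤ 4 := by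
    calc (2 : ℝ) ^ α ≤ 2 ^ (2 : ℝ) := rpow_le_rpow_of_exponent_le one_le_two hα
      _ = 4 := by norm_num
  calc a ≤ 2 * (2 * R) ^ α :=
        le_of_mul_le_mul_right (by linarith [hsplit]) (rpow_pos_of_pos h2R (2 - α))
    _ = 2 * 2 ^ α * R ^ α := by rw [mul_rpow zero_le_two hR.le]; ring
    _ ≤ 8 * R ^ α := by nlinarith [rpow_pos_of_pos hR α]

-- Applied with `T = R ^ ((α + 1) / 2)`, `P = C_S * R ^ ((1 - α) / 2) / (α - 1)`, `q = 2 ^ (3 - α)`.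
lemma two_div_mul_add_mul_le_div {α ε T P q : ℝ} (hα : 1 < α) (hε0 : 0 ≤ ε) (hε1 : ε ≤ 1)
    (hT : 0 ≤ T) (hP : 0 ≤ P) (hq1 : 1 < q) (hq4 : q ≤ 4) (hq : 4 - q ≤ 3 * (α - 1))
    (hPT : (1 - ε) * (α - 1) * P ≤ 8 * T) :
    2 / (α + 1) * T + (1 + ε) * P ≤
      (32 * T + ((1 + ε) * (q ^ 2 / 4) - (1 - ε)) * P) / (q - 1) := by
  rw [le_div_iff₀ (by linarith)]
  have hTcoef : 2 / (α + 1) * (q - 1) ≤ 3 := by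
    rw [div_mul_eq_mul_div, div_le_iff₀ (by linarith)]
    linarith
  have hPcoef : (1 + ε) * (q - 1) - ((1 + ε) * (q ^ 2 / 4) - (1 - ε)) ≤
      3 * ((1 - ε) * (α - 1)) := by
    -- the left side is `(1 - ε) - (1 + ε) * (q / 2 - 1) ^ 2 ≤ (1 - ε) * (q / 2) * (2 - q / 2)`
    have h1ε : 0 ≤ 1 - ε := by linarith
    have h2q : 0 ≤ 2 - q / 2 := by linarith
    nlinarith [mul_nonneg hε0 (sq_nonneg (q / 2 - 1)), mul_le_mul_of_nonneg_left hq h1ε,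
      mul_nonneg (mul_nonneg h1ε h2q) h2q]
  nlinarith [mul_le_mul_of_nonneg_right hTcoef hT, mul_le_mul_of_nonneg_right hPcoef hP]

lemma two_rpow_four_sub_two_mul (α : ℝ) : (2 : ℝ) ^ (4 - 2 * α) = (2 ^ (3 - α)) ^ 2 / 4 := by
  have h : ((2 : ℝ) ^ (3 - α)) ^ 2 = 2 ^ (4 - 2 * α) * 2 ^ (2 : ℝ) := by
    rw [← rpow_natCast, ← rpow_mul zero_le_two, ← rpow_add two_pos]
    congr 1; push_cast; ring
  rw [h, rpow_two]; ring

lemma moment_bound_le_dyadic_bound {α ε R C : ℝ} (hα1 : 1 < α) (hα2 : α < 2) (hε0 : 0 ≤ ε)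
    (hε1 : ε ≤ 1) (hR : 0 < R) (hC : 0 ≤ C) (hCR : (1 - ε) * C ≤ 8 * R ^ α) :
    2 * (3 - α) / (α + 1) * R ^ ((α + 1) / 2) +
        (3 - α) / (α - 1) * ((1 + ε) * C) * R ^ ((1 - α) / 2) ≤
      (3 - α) / (2 ^ (3 - α) - 1) * (32 * R ^ ((α + 1) / 2) +
          C * ((1 + ε) * 2 ^ (4 - 2 * α) - (1 - ε)) * (R ^ ((1 - α) / 2) / (α - 1))) := by
  set q : ℝ := 2 ^ (3 - α)
  have hq1 : 1 < q := one_lt_rpow one_lt_two (by linarith)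
  have hq4 : q ≤ 4 := by
    calc q ≤ 2 ^ (2 : ℝ) := rpow_le_rpow_of_exponent_le one_le_two (by linarith)
      _ = 4 := by norm_num
  set T := R ^ ((α + 1) / 2)
  set P := C * R ^ ((1 - α) / 2) / (α - 1)
  have hPT : (1 - ε) * (α - 1) * P ≤ 8 * T := by
    calc (1 - ε) * (α - 1) * P = (1 - ε) * C * R ^ ((1 - α) / 2) := by
          simp only [P]; field_simp [show α - 1 ≠ 0 by linarith]
      _ ≤ 8 * R ^ α * R ^ ((1 - α) / 2) := by gcongr
      _ = 8 * T := by rw [mul_assoc, ← rpow_add hR, show α + (1 - α) / 2 = (α + 1) / 2 by ring]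
  calc _ = (3 - α) * (2 / (α + 1) * T + (1 + ε) * P) := by ring
    _ ≤ (3 - α) * ((32 * T + ((1 + ε) * (q ^ 2 / 4) - (1 - ε)) * P) / (q - 1)) := by
        gcongr
        · linarith
        · exact two_div_mul_add_mul_le_div hα1 hε0 hε1 (by positivity) (by positivity) hq1 hq4
            (four_sub_two_rpow_three_sub_le hα1.le) hPT
    _ = _ := by rw [two_rpow_four_sub_two_mul]; ring

lemma integral_Ioi_sqrt_rpow_neg {α R : ℝ} (hα : 1 < α) (hR : 0 < R) :
    ∫ x in Ioi √R, x ^ (-α) = R ^ ((1 - α) / 2) / (α - 1) := by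
  rw [integral_Ioi_rpow_of_lt (by linarith) (sqrt_pos.mpr hR), sqrt_eq_rpow, ← rpow_mul hR.le,
    show -α + 1 = -(α - 1) by ring, neg_div_neg_eq]
  congr 2; ring

/-- Uniform bound on the `(1+α)`-moment of a probability measure on `ℝ` whose truncated
fourth moments behave like `C_S x^{2−α}` beyond `R` and satisfy the trivial bound `2x⁴`. -/
theorem moment_one_add_alpha_bound
    (μ : Measure ℝ) [IsProbabilityMeasure μ]
    (C_S α R ε : ℝ) (hC : 0 < C_S) (hα1 : 1 < α) (hα2 : α < 2)
    (hR : 0 < R) (hε0 : 0 < ε) (hε1 : ε < 1)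
    (htriv : ∀ x : ℝ, 0 < x → (∫ v in Set.Icc (-x) x, v ^ 4 ∂μ) ≤ 2 * x ^ 4)
    (hasymp : ∀ x : ℝ, R < x →
      (1 - ε) * C_S * x ^ (2 - α) ≤
          (∫ v in Set.Icc (-Real.sqrt x) (Real.sqrt x), v ^ 4 ∂μ) ∧
        (∫ v in Set.Icc (-Real.sqrt x) (Real.sqrt x), v ^ 4 ∂μ) ≤
          (1 + ε) * C_S * x ^ (2 - α)) :
    ∫⁻ v, ENNReal.ofReal (|v| ^ (1 + α)) ∂μ ≤
      ENNReal.ofReal ((3 - α) / (2 ^ (3 - α) - 1) *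
        (32 * R ^ ((α + 1) / 2) +
          C_S * ((1 + ε) * 2 ^ (4 - 2 * α) - (1 - ε)) *
            ∫ x in Set.Ioi (Real.sqrt R), x ^ (-α))) := by
  have hsmall (x : ℝ) (hx : 0 < x) : truncFourthMoment μ x ≤ 2 * x ^ 2 := by
    have h := htriv (√x) (sqrt_pos.mpr hx)
    rwa [show √x ^ 4 = x ^ 2 by rw [show 4 = 2 * 2 from rfl, pow_mul, sq_sqrt hx.le]] at h
  have hCS : (1 - ε) * C_S ≤ 8 * R ^ α :=
    le_eight_mul_rpow hα2.le hR ((hasymp (2 * R) (by linarith)).1.trans (hsmall _ (by linarith)))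
  rw [integral_Ioi_sqrt_rpow_neg hα1 hR]
  refine (lintegral_abs_rpow_one_add_le μ hα1 (by linarith) hR (by positivity)
    (fun x hx _ => hsmall x hx) (fun x hx => (hasymp x hx).2)).trans (ENNReal.ofReal_le_ofReal ?_)
  exact moment_bound_le_dyadic_bound hα1 hα2 hε0.le hε1.le hR hC.le hCS
end

section
/- Let g be a probability density on ℝ with zero mean, 1 < α < 2, 0 < δ < 2 − α, σ > 0, β ∈ [−1,1], and suppose ∫_ℝ |x|^{α+δ} |g(x) − γ_{σ,α,β}(x)| dx < ∞, where γ_{σ,α,β} is the α-stable density with characteristic function exp(−σ|ξ|^α(1 + iβ·sgn(ξ)tan(πα/2))). Then the remainder η(ξ) := ĝ(ξ) − 1 + σ|ξ|^α(1 + iβ·sgn(ξ)tan(πα/2)) satisfies |η(ξ)| ≤ C|ξ|^{α+δ} for some constant C > 0 and all ξ. -/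
/-! A stable law with `α > 1` is centred: its characteristic function is `1 + O(|ξ|^α)`, so its
derivative `i ∫ x γ(x) dx` at `0` vanishes. Hence `g - γ` has vanishing zeroth and first moments and
`ĝ(ξ) - γ̂(ξ) = ∫ (e^{ixξ} - 1 - ixξ) (g - γ)(x) dx`, which is `O(|ξ|^{α+δ})` because
`|e^w - 1 - w| ≤ 3 |w|^q` whenever `Re w ≤ 0` and `1 ≤ q ≤ 2`. The same estimate with
`w = -ψ(ξ)`, `ψ(ξ) = σ|ξ|^α(1 + iβ sgn(ξ) tan(πα/2))` and `q = (α + δ)/α` bounds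
`γ̂(ξ) - 1 + ψ(ξ) = e^{-ψ(ξ)} - 1 + ψ(ξ)` by a multiple of `|ξ|^{α+δ}`. -/

open MeasureTheory Real
open Filter Topology

theorem Complex.norm_exp_sub_one_sub_le_rpow {w : ℂ} (hw : w.re ≤ 0) {q : ℝ} (hq1 : 1 ≤ q)
    (hq2 : q ≤ 2) : ‖Complex.exp w - 1 - w‖ ≤ 3 * ‖w‖ ^ q := by
  have hq_nonneg : 0 ≤ ‖w‖ ^ q := by positivity
  rcases le_or_gt ‖w‖ 1 with hsmall | hlarge
  · calc ‖Complex.exp w - 1 - w‖ ≤ ‖w‖ ^ (2 : ℝ) := by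
          simpa using Complex.norm_exp_sub_one_sub_id_le hsmall
      _ ≤ ‖w‖ ^ q := rpow_le_rpow_of_exponent_ge' (norm_nonneg w) hsmall (by linarith) hq2
      _ ≤ 3 * ‖w‖ ^ q := by linarith
  · have hexp : ‖Complex.exp w‖ ≤ 1 := by
      rw [Complex.norm_exp]; exact exp_le_one_iff.2 hw
    calc ‖Complex.exp w - 1 - w‖ ≤ ‖Complex.exp w‖ + ‖(1 : ℂ)‖ + ‖w‖ :=
          (norm_sub_le _ _).trans (by gcongr; exact norm_sub_le _ _)
      _ ≤ 3 * ‖w‖ := by rw [norm_one]; linarith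
      _ ≤ 3 * ‖w‖ ^ q := by gcongr; exact self_le_rpow_of_one_le hlarge.le hq1

theorem integrable_mul_of_integrable_rpow_mul {f : ℝ → ℝ} {p : ℝ} (hp : 1 ≤ p) (hf : Integrable f)
    (hpf : Integrable fun x ↦ |x| ^ p * |f x|) : Integrable fun x ↦ x * f x := by
  refine (hf.abs.add hpf).mono' (aestronglyMeasurable_id.mul hf.1) (.of_forall fun x ↦ ?_)
  have hx : |x| ≤ 1 + |x| ^ p := by
    rcases le_or_gt |x| 1 with h | h
    · linarith [rpow_nonneg (abs_nonneg x) p]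
    · linarith [self_le_rpow_of_one_le h.le hp]
  calc ‖x * f x‖ = |x| * |f x| := by rw [norm_mul, norm_eq_abs, norm_eq_abs]
    _ ≤ (1 + |x| ^ p) * |f x| := by gcongr
    _ = |f x| + |x| ^ p * |f x| := by ring

theorem HasDerivAt.eq_zero_of_norm_sub_le_rpow {E : Type*} [NormedAddCommGroup E]
    [NormedSpace ℝ E] {f : ℝ → E} {f' : E} {x₀ C α : ℝ} (hf : HasDerivAt f f' x₀) (hα : 1 < α)
    (hle : ∀ x, ‖f x - f x₀‖ ≤ C * |x - x₀| ^ α) : f' = 0 := by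
  have hslope : Tendsto (slope f x₀) (𝓝[≠] x₀) (𝓝 0) := by
    have hlim : Tendsto (fun x ↦ C * |x - x₀| ^ (α - 1)) (𝓝[≠] x₀) (𝓝 0) := by
      have : Continuous fun x ↦ C * |x - x₀| ^ (α - 1) :=
        continuous_const.mul ((continuous_abs.comp (continuous_sub_right x₀)).rpow_const
          fun _ ↦ Or.inr (by linarith))
      simpa [zero_rpow (by linarith : α - 1 ≠ 0)] using
        (this.tendsto x₀).mono_left nhdsWithin_le_nhds
    refine squeeze_zero_norm' ?_ hlim
    filter_upwards [self_mem_nhdsWithin] with x hx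
    have hpos : 0 < |x - x₀| := abs_pos.2 (sub_ne_zero.2 hx)
    rw [slope_def_module, norm_smul, norm_inv, norm_eq_abs, inv_mul_le_iff₀ hpos]
    calc ‖f x - f x₀‖ ≤ C * |x - x₀| ^ α := hle x
      _ = |x - x₀| * (C * |x - x₀| ^ (α - 1)) := by
        rw [rpow_sub hpos, rpow_one]; field_simp
  exact tendsto_nhds_unique (hasDerivAt_iff_tendsto_slope.1 hf) hslope

noncomputable def densityCharFun (f : ℝ → ℝ) (ξ : ℝ) : ℂ :=
  ∫ x : ℝ, Complex.exp (Complex.I * x * ξ) * (f x : ℂ)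

section densityCharFun

variable {f h : ℝ → ℝ}

theorem norm_exp_I_mul_ofReal_mul_ofReal (x ξ : ℝ) : ‖Complex.exp (Complex.I * x * ξ)‖ = 1 := by
  rw [Complex.norm_exp]; simp

theorem integrable_densityCharFun_integrand (hf : Integrable f) (ξ : ℝ) :
    Integrable fun x : ℝ ↦ Complex.exp (Complex.I * x * ξ) * (f x : ℂ) :=
  hf.ofReal.bdd_mul (by fun_prop) (c := 1)
    (.of_forall fun x ↦ (norm_exp_I_mul_ofReal_mul_ofReal x ξ).le)

theorem densityCharFun_zero : densityCharFun f 0 = ∫ x, f x := by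
  simp [densityCharFun, integral_complex_ofReal]

theorem densityCharFun_sub (hf : Integrable f) (hh : Integrable h) (ξ : ℝ) :
    densityCharFun (f - h) ξ = densityCharFun f ξ - densityCharFun h ξ := by
  rw [densityCharFun, densityCharFun, densityCharFun,
    ← integral_sub (integrable_densityCharFun_integrand hf ξ)
      (integrable_densityCharFun_integrand hh ξ)]
  congr 1 with x
  simp [mul_sub]

theorem hasDerivAt_densityCharFun (hf : Integrable f) (hxf : Integrable fun x ↦ x * f x)
    (ξ₀ : ℝ) : HasDerivAt (densityCharFun f)
      (∫ x : ℝ, Complex.I * x * Complex.exp (Complex.I * x * ξ₀) * (f x : ℂ)) ξ₀ := by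
  have hderiv : ∀ x ξ : ℝ, HasDerivAt (fun ξ : ℝ ↦ Complex.exp (Complex.I * x * ξ) * (f x : ℂ))
      (Complex.I * x * Complex.exp (Complex.I * x * ξ) * (f x : ℂ)) ξ := by
    intro x ξ
    have := (((hasDerivAt_id ξ).ofReal_comp).const_mul (Complex.I * x)).cexp.mul_const (f x : ℂ)
    simp only [id, Complex.ofReal_one, mul_one] at this
    exact this.congr_deriv (by ring)
  refine (hasDerivAt_integral_of_dominated_loc_of_deriv_le (bound := fun x ↦ |x * f x|)
    univ_mem (.of_forall fun ξ ↦ (integrable_densityCharFun_integrand hf ξ).1)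
    (integrable_densityCharFun_integrand hf ξ₀) (by fun_prop) ?_ hxf.abs
    (.of_forall fun x ξ _ ↦ hderiv x ξ)).2
  refine .of_forall fun x ξ _ ↦ le_of_eq ?_
  simp only [norm_mul, Complex.norm_I, Complex.norm_real, norm_exp_I_mul_ofReal_mul_ofReal,
    norm_eq_abs, abs_mul, one_mul, mul_one]

theorem densityCharFun_eq_integral_of_moments_eq_zero (hf : Integrable f)
    (hxf : Integrable fun x ↦ x * f x) (h0 : ∫ x, f x = 0) (h1 : ∫ x, x * f x = 0) (ξ : ℝ) :
    densityCharFun f ξ =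
      ∫ x : ℝ, (Complex.exp (Complex.I * x * ξ) - 1 - Complex.I * x * ξ) * (f x : ℂ) := by
  have hlin : Integrable fun x : ℝ ↦ (f x : ℂ) + Complex.I * ξ * ((x * f x : ℝ) : ℂ) :=
    hf.ofReal.add (hxf.ofReal.const_mul _)
  calc densityCharFun f ξ
      = densityCharFun f ξ - ∫ x : ℝ, ((f x : ℂ) + Complex.I * ξ * ((x * f x : ℝ) : ℂ)) := by
        rw [integral_add hf.ofReal (hxf.ofReal.const_mul _), integral_const_mul,
          integral_complex_ofReal, integral_complex_ofReal, h0, h1]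
        simp
    _ = _ := by
        rw [densityCharFun, ← integral_sub (integrable_densityCharFun_integrand hf ξ) hlin]
        congr 1 with x
        push_cast
        ring

theorem norm_integral_exp_sub_one_sub_mul_le {p : ℝ} (hp1 : 1 ≤ p) (hp2 : p ≤ 2)
    (hpf : Integrable fun x ↦ |x| ^ p * |f x|) (ξ : ℝ) :
    ‖∫ x : ℝ, (Complex.exp (Complex.I * x * ξ) - 1 - Complex.I * x * ξ) * (f x : ℂ)‖ ≤
      3 * |ξ| ^ p * ∫ x, |x| ^ p * |f x| := by
  rw [← integral_const_mul]
  refine norm_integral_le_of_norm_le (hpf.const_mul _) (.of_forall fun x ↦ ?_)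
  have hbound := Complex.norm_exp_sub_one_sub_le_rpow (w := Complex.I * x * ξ) (by simp) hp1 hp2
  rw [norm_mul, norm_mul, Complex.norm_I, one_mul, Complex.norm_real, Complex.norm_real,
    norm_eq_abs, norm_eq_abs, mul_rpow (abs_nonneg x) (abs_nonneg ξ)] at hbound
  rw [norm_mul, Complex.norm_real, norm_eq_abs]
  calc _ ≤ 3 * (|x| ^ p * |ξ| ^ p) * |f x| := by gcongr
    _ = _ := by ring

end densityCharFun

noncomputable def stableExponent (σ α β ξ : ℝ) : ℂ :=
  ((σ * |ξ| ^ α : ℝ) : ℂ) *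
    (1 + Complex.I * (β : ℂ) * ((Real.sign ξ) : ℂ) * ((Real.tan (π * α / 2)) : ℂ))

section stableExponent

variable {σ α : ℝ} (β : ℝ)

theorem stableExponent_zero (hα : α ≠ 0) : stableExponent σ α β 0 = 0 := by
  simp [stableExponent, zero_rpow hα]

theorem re_stableExponent (ξ : ℝ) : (stableExponent σ α β ξ).re = σ * |ξ| ^ α := by
  have himag : Complex.I * (β : ℂ) * ((Real.sign ξ) : ℂ) * ((tan (π * α / 2)) : ℂ) =
      Complex.I * ((β * Real.sign ξ * tan (π * α / 2) : ℝ) : ℂ) := by push_cast; ring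
  rw [stableExponent, himag, Complex.re_ofReal_mul]
  simp only [Complex.add_re, Complex.one_re, Complex.I_mul_re, Complex.ofReal_im, neg_zero,
    add_zero, mul_one]

theorem norm_stableExponent_le (hσ : 0 ≤ σ) (ξ : ℝ) :
    ‖stableExponent σ α β ξ‖ ≤ σ * (1 + |β * tan (π * α / 2)|) * |ξ| ^ α := by
  have hsign : |Real.sign ξ| ≤ 1 := by
    rcases Real.sign_apply_eq ξ with h | h | h <;> simp [h]
  have hfactor : ‖1 + Complex.I * (β : ℂ) * ((Real.sign ξ) : ℂ) * ((tan (π * α / 2)) : ℂ)‖ ≤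
      1 + |β * tan (π * α / 2)| := by
    refine (norm_add_le _ _).trans ?_
    simp only [norm_one, norm_mul, Complex.norm_I, Complex.norm_real, norm_eq_abs, abs_mul]
    calc _ = 1 + |β| * |Real.sign ξ| * |tan (π * α / 2)| := by ring
      _ ≤ 1 + |β| * 1 * |tan (π * α / 2)| := by gcongr
      _ = _ := by ring
  rw [stableExponent, norm_mul, Complex.norm_real, norm_eq_abs, abs_of_nonneg (by positivity)]
  calc _ ≤ σ * |ξ| ^ α * (1 + |β * tan (π * α / 2)|) := by gcongr
    _ = _ := by ring

theorem norm_exp_neg_stableExponent_sub_le (hσ : 0 ≤ σ) (hα : 0 < α) {p : ℝ} (hαp : α ≤ p)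
    (hp : p ≤ 2 * α) (ξ : ℝ) :
    ‖Complex.exp (-stableExponent σ α β ξ) - 1 + stableExponent σ α β ξ‖ ≤
      3 * (σ * (1 + |β * tan (π * α / 2)|)) ^ (p / α) * |ξ| ^ p := by
  have hq1 : 1 ≤ p / α := (one_le_div hα).2 hαp
  have hq2 : p / α ≤ 2 := (div_le_iff₀ hα).2 hp
  have hre : (-stableExponent σ α β ξ).re ≤ 0 := by
    rw [Complex.neg_re, re_stableExponent, neg_nonpos]; positivity
  have hbound := Complex.norm_exp_sub_one_sub_le_rpow hre hq1 hq2
  rw [sub_neg_eq_add, norm_neg] at hbound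
  calc _ ≤ 3 * ‖stableExponent σ α β ξ‖ ^ (p / α) := hbound
    _ ≤ 3 * (σ * (1 + |β * tan (π * α / 2)|) * |ξ| ^ α) ^ (p / α) := by
        gcongr; exact norm_stableExponent_le β hσ ξ
    _ = _ := by
        rw [mul_rpow (by positivity) (by positivity), ← rpow_mul (abs_nonneg ξ),
          mul_div_cancel₀ p hα.ne', mul_assoc]

theorem integral_mul_eq_zero_of_densityCharFun_eq_stable {γ : ℝ → ℝ} (hσ : 0 ≤ σ) (hα : 1 < α)
    (hγ : Integrable γ) (hxγ : Integrable fun x ↦ x * γ x)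
    (hchar : ∀ ξ, densityCharFun γ ξ = Complex.exp (-stableExponent σ α β ξ)) :
    ∫ x, x * γ x = 0 := by
  have hderiv := hasDerivAt_densityCharFun hγ hxγ 0
  simp only [Complex.ofReal_zero, mul_zero, Complex.exp_zero, mul_one] at hderiv
  have hbound : ∀ ξ, ‖densityCharFun γ ξ - densityCharFun γ 0‖ ≤
      4 * (σ * (1 + |β * tan (π * α / 2)|)) * |ξ - 0| ^ α := by
    intro ξ
    have h := norm_exp_neg_stableExponent_sub_le β hσ (by linarith) le_rfl (by linarith) ξ
    rw [div_self (by linarith), rpow_one] at h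
    rw [hchar, hchar, stableExponent_zero β (by linarith), neg_zero, Complex.exp_zero, sub_zero]
    calc _ = ‖(Complex.exp (-stableExponent σ α β ξ) - 1 + stableExponent σ α β ξ) -
          stableExponent σ α β ξ‖ := by ring_nf
      _ ≤ _ := norm_sub_le _ _
      _ ≤ _ := by linarith [norm_stableExponent_le (α := α) β hσ ξ]
  have hmean : ∫ x : ℝ, Complex.I * x * (γ x : ℂ) = Complex.I * ((∫ x, x * γ x : ℝ) : ℂ) := by
    rw [← integral_complex_ofReal, ← integral_const_mul]
    congr 1 with x
    push_cast
    ring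
  have hzero := hderiv.eq_zero_of_norm_sub_le_rpow hα hbound
  rw [hmean, mul_eq_zero] at hzero
  exact_mod_cast hzero.resolve_left Complex.I_ne_zero

end stableExponent

theorem fda_of_order_delta_general
    (g : ℝ → ℝ)
    (hg_int : Integrable g) (hg_mass : ∫ x, g x = 1)
    (hg_mean : Integrable (fun x => x * g x)) (hg_mean0 : ∫ x, x * g x = 0)
    (σ α β δ : ℝ) (hσ : 0 < σ) (hα1 : 1 < α)
    (hδ0 : 0 < δ) (hδ : δ < 2 - α)
    (γ : ℝ → ℝ) (hγ_int : Integrable γ)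
    (hγ_char : ∀ ξ : ℝ, (∫ x : ℝ, Complex.exp (Complex.I * x * ξ) * (γ x : ℂ)) =
      Complex.exp (-((σ * |ξ| ^ α : ℝ) : ℂ) *
        (1 + Complex.I * (β : ℂ) * ((Real.sign ξ) : ℂ) * ((Real.tan (π * α / 2)) : ℂ))))
    (hclose : Integrable (fun x => |x| ^ (α + δ) * |g x - γ x|)) :
    ∃ C : ℝ, 0 < C ∧ ∀ ξ : ℝ,
      ‖(∫ x : ℝ, Complex.exp (Complex.I * x * ξ) * (g x : ℂ)) - 1 +
          ((σ * |ξ| ^ α : ℝ) : ℂ) *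
            (1 + Complex.I * (β : ℂ) * ((Real.sign ξ) : ℂ) *
              ((Real.tan (π * α / 2)) : ℂ))‖ ≤ C * |ξ| ^ (α + δ) := by
  have hp1 : 1 ≤ α + δ := by linarith
  have hp2 : α + δ ≤ 2 := by linarith
  have hchar (ξ : ℝ) : densityCharFun γ ξ = Complex.exp (-stableExponent σ α β ξ) := by
    rw [densityCharFun, hγ_char, stableExponent, neg_mul]
  have hγ_mass : ∫ x, γ x = 1 := by
    have h0 := hchar 0
    rw [densityCharFun_zero, stableExponent_zero β (by linarith), neg_zero, Complex.exp_zero] at h0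
    exact_mod_cast h0
  have hd : Integrable (g - γ) := hg_int.sub hγ_int
  have hxd : Integrable fun x ↦ x * (g - γ) x :=
    integrable_mul_of_integrable_rpow_mul hp1 hd hclose
  have hxγ : Integrable fun x ↦ x * γ x :=
    (hg_mean.sub hxd).congr (.of_forall fun x ↦ by simp only [Pi.sub_apply]; ring)
  have hγ_mean := integral_mul_eq_zero_of_densityCharFun_eq_stable β hσ.le hα1 hγ_int hxγ hchar
  have hd_mass : ∫ x, (g - γ) x = 0 := by
    simp only [Pi.sub_apply, integral_sub hg_int hγ_int, hg_mass, hγ_mass, sub_self]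
  have hxd_mean : ∫ x, x * (g - γ) x = 0 := by
    simp only [Pi.sub_apply, mul_sub, integral_sub hg_mean hxγ, hg_mean0, hγ_mean, sub_self]
  set A := ∫ x, |x| ^ (α + δ) * |(g - γ) x|
  set K := σ * (1 + |β * tan (π * α / 2)|)
  refine ⟨3 * (A + K ^ ((α + δ) / α)), by positivity, fun ξ ↦ ?_⟩
  have hsplit : densityCharFun g ξ - 1 + stableExponent σ α β ξ =
      (∫ x : ℝ, (Complex.exp (Complex.I * x * ξ) - 1 - Complex.I * x * ξ) * ((g - γ) x : ℂ)) +
        (Complex.exp (-stableExponent σ α β ξ) - 1 + stableExponent σ α β ξ) := by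
    rw [← densityCharFun_eq_integral_of_moments_eq_zero hd hxd hd_mass hxd_mean,
      densityCharFun_sub hg_int hγ_int, hchar]
    ring
  calc _ = ‖densityCharFun g ξ - 1 + stableExponent σ α β ξ‖ := rfl
    _ ≤ 3 * |ξ| ^ (α + δ) * A + 3 * K ^ ((α + δ) / α) * |ξ| ^ (α + δ) := by
      rw [hsplit]
      exact norm_add_le_of_le (norm_integral_exp_sub_one_sub_mul_le hp1 hp2 hclose ξ)
        (norm_exp_neg_stableExponent_sub_le β hσ.le (by linarith) (by linarith) (by linarith) ξ)
    _ = _ := by ring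

/-- If a zero-mean probability density `g` satisfies
`∫ |x|^{α+δ} |g(x) − γ_{σ,α,β}(x)| dx < ∞`, where `γ_{σ,α,β}` is the α-stable density
with characteristic function `exp(−σ|ξ|^α(1 + iβ sgn(ξ) tan(πα/2)))`, then the remainder
`η(ξ) = ĝ(ξ) − 1 + σ|ξ|^α(1 + iβ sgn(ξ) tan(πα/2))` satisfies `|η(ξ)| ≤ C|ξ|^{α+δ}`. -/
theorem fda_of_order_delta
    (g : ℝ → ℝ) (hg_meas : Measurable g) (hg_nonneg : ∀ x, 0 ≤ g x)
    (hg_int : Integrable g) (hg_mass : ∫ x, g x = 1)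
    (hg_mean : Integrable (fun x => x * g x)) (hg_mean0 : ∫ x, x * g x = 0)
    (σ α β δ : ℝ) (hσ : 0 < σ) (hα1 : 1 < α) (hα2 : α < 2)
    (hδ0 : 0 < δ) (hδ : δ < 2 - α) (hβ : β ∈ Set.Icc (-1 : ℝ) 1)
    (γ : ℝ → ℝ) (hγ_nonneg : ∀ x, 0 ≤ γ x) (hγ_int : Integrable γ)
    (hγ_char : ∀ ξ : ℝ, (∫ x : ℝ, Complex.exp (Complex.I * x * ξ) * (γ x : ℂ)) =
      Complex.exp (-((σ * |ξ| ^ α : ℝ) : ℂ) *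
        (1 + Complex.I * (β : ℂ) * ((Real.sign ξ) : ℂ) * ((Real.tan (π * α / 2)) : ℂ))))
    (hclose : Integrable (fun x => |x| ^ (α + δ) * |g x - γ x|)) :
    ∃ C : ℝ, 0 < C ∧ ∀ ξ : ℝ,
      ‖(∫ x : ℝ, Complex.exp (Complex.I * x * ξ) * (g x : ℂ)) - 1 +
          ((σ * |ξ| ^ α : ℝ) : ℂ) *
            (1 + Complex.I * (β : ℂ) * ((Real.sign ξ) : ℂ) *
              ((Real.tan (π * α / 2)) : ℂ))‖ ≤ C * |ξ| ^ (α + δ) :=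
  fda_of_order_delta_general g hg_int hg_mass hg_mean hg_mean0 σ α β δ hσ hα1 hδ0 hδ γ hγ_int
    hγ_char hclose
end
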